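/- arXiv:2403.07685 — 4 statements merged into one kernel-verified Lean document; each statement's English description precedes it below -/
import Mathlib

section
/- In the binary search tree interval splitting process, there exists an almost surely finite random variable $K_1$ such that for all $k \ge K_1$, $\max_{\alpha\in[0,1]} I_{\alpha,k} \le k\,(2/3)^{k/2}$, where $I_{\alpha,k}$ denotes the length of the level-$k$ interval containing $\alpha$. -/
open MeasureTheory ProbabilityTheory
open scoped ENNReal

/-!
Unfolding the recursion, `I_φ` is the product, over the proper prefixes `ψ` of `φ`, of `V_ψ` or
`1 - V_ψ`. These factors are independent with second moment `1/3`, so `𝔼 I_φ² = 3^{-k}` for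
`|φ| = k`, and the level sum `S_k = ∑_{|φ|=k} I_φ²` has mean `(2/3)^k`. Markov's inequality
bounds `ℙ(S_k ≥ k² (2/3)^k)` by `1/k²`, which is summable, so by Borel–Cantelli almost surely
`S_k < k² (2/3)^k` for all large `k`; finally `I_φ ≤ √S_k` for every `φ` of length `k`.
-/

def splitFraction (b : Bool) (x : ℝ) : ℝ := if b then 1 - x else x

lemma continuous_splitFraction (b : Bool) : Continuous (splitFraction b) := by
  cases b
  exacts [continuous_id, continuous_const.sub continuous_id]

lemma setIntegral_Icc_splitFraction_sq (b : Bool) :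
    ∫ x in Set.Icc (0 : ℝ) 1, splitFraction b x ^ 2 = 1 / 3 := by
  rw [integral_Icc_eq_integral_Ioc, ← intervalIntegral.integral_of_le zero_le_one]
  cases b
  · norm_num [splitFraction, integral_pow]
  · simp only [splitFraction, if_true]
    rw [intervalIntegral.integral_comp_sub_left (fun x => x ^ 2) 1]
    norm_num [integral_pow]

lemma List.take_injective_fin {α : Type*} (l : List α) :
    Function.Injective fun i : Fin l.length => l.take i := by
  intro i j h
  have := congrArg List.length h
  simp only [List.length_take] at this
  omega

lemma mul_rpow_div_two_sq (x : ℝ) {a : ℝ} (ha : 0 ≤ a) (k : ℕ) :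
    (x * a ^ ((k : ℝ) / 2)) ^ 2 = x ^ 2 * a ^ k := by
  rw [mul_pow, ← Real.rpow_mul_natCast ha, ← Real.rpow_natCast]
  norm_num

section Splitting

variable {Ω : Type*} {V I : List Bool → Ω → ℝ}

lemma prod_splitFraction (hI0 : ∀ ω, I [] ω = 1)
    (hI : ∀ φ b ω, I (φ ++ [b]) ω = I φ ω * splitFraction b (V φ ω)) (φ : List Bool) (ω : Ω) :
    ∏ i ∈ Finset.range φ.length, splitFraction (φ.getD i false) (V (φ.take i) ω) = I φ ω := by
  induction φ using List.reverseRecOn with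
  | nil => simp [hI0]
  | append_singleton ψ b ih =>
    rw [hI, ← ih, List.length_append, List.length_singleton, Finset.prod_range_succ]
    congr 1
    · refine Finset.prod_congr rfl fun i hi => ?_
      have hi : i < ψ.length := Finset.mem_range.mp hi
      simp [List.getD, List.getElem?_append_left hi, List.take_append_of_le_length hi.le]
    · simp

def levelSqSum (I : List Bool → Ω → ℝ) (k : ℕ) (ω : Ω) : ℝ :=
  ∑ v : Fin k → Bool, I (List.ofFn v) ω ^ 2

lemma le_of_levelSqSum_lt {k : ℕ} {ω : Ω} {t : ℝ} (ht : 0 ≤ t)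
    (h : levelSqSum I k ω < t ^ 2) {φ : List Bool} (hφ : φ.length = k) : I φ ω ≤ t := by
  subst hφ
  have hφ_le : I φ ω ^ 2 ≤ levelSqSum I φ.length ω := by
    simpa [levelSqSum] using
      Finset.single_le_sum (f := fun v : Fin φ.length → Bool => I (List.ofFn v) ω ^ 2)
        (fun v _ => sq_nonneg _) (Finset.mem_univ φ.get)
  exact (lt_of_pow_lt_pow_left₀ 2 ht (hφ_le.trans_lt h)).le

end Splitting

section Probability

variable {Ω : Type*} [MeasurableSpace Ω] {μ : Measure Ω}

lemma integral_splitFraction_sq_of_map_eq {X : Ω → ℝ}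
    (hX : μ.map X = volume.restrict (Set.Icc 0 1)) (b : Bool) :
    ∫ ω, splitFraction b (X ω) ^ 2 ∂μ = 1 / 3 := by
  have hXm : AEMeasurable X μ := .of_map_ne_zero (by simp [hX])
  rw [← setIntegral_Icc_splitFraction_sq b, ← hX, integral_map hXm]
  exact ((continuous_splitFraction b).pow 2).aestronglyMeasurable

lemma measure_ge_le_ofReal_integral_div [IsFiniteMeasure μ] {f : Ω → ℝ} (hf0 : 0 ≤ᵐ[μ] f)
    (hf : Integrable f μ) {c : ℝ} (hc : 0 < c) :
    μ {ω | c ≤ f ω} ≤ ENNReal.ofReal ((∫ ω, f ω ∂μ) / c) := by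
  rw [ENNReal.le_ofReal_iff_toReal_le (measure_ne_top _ _)
    (div_nonneg (integral_nonneg_of_ae hf0) hc.le), le_div_iff₀ hc, mul_comm, ← measureReal_def]
  exact mul_meas_ge_le_integral_of_nonneg hf0 hf c

structure IsUniformSplitting (μ : Measure Ω) (V I : List Bool → Ω → ℝ) : Prop where
  indep : iIndepFun V μ
  map_eq : ∀ φ, μ.map (V φ) = volume.restrict (Set.Icc 0 1)
  root : ∀ ω, I [] ω = 1
  append_singleton : ∀ φ b ω, I (φ ++ [b]) ω = I φ ω * splitFraction b (V φ ω)

namespace IsUniformSplitting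

variable {V I : List Bool → Ω → ℝ}

lemma integral_sq (h : IsUniformSplitting μ V I) (φ : List Bool) :
    ∫ ω, I φ ω ^ 2 ∂μ = (1 / 3) ^ φ.length := by
  have hX : iIndepFun (fun i : Fin φ.length => V (φ.take i)) μ :=
    h.indep.precomp φ.take_injective_fin
  have hXm (i : Fin φ.length) : AEMeasurable (V (φ.take i)) μ :=
    .of_map_ne_zero (by simp [h.map_eq])
  simp_rw [← prod_splitFraction h.root h.append_singleton φ, ← Finset.prod_pow,
    Finset.prod_range (fun i => splitFraction (φ.getD i false) (V (φ.take i) _) ^ 2)]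
  rw [hX.integral_fun_prod_comp
    (f := fun (i : Fin φ.length) x => splitFraction (φ.getD i false) x ^ 2) hXm
    fun _ => ((continuous_splitFraction _).pow 2).aestronglyMeasurable]
  simp [integral_splitFraction_sq_of_map_eq (h.map_eq _)]

lemma integral_levelSqSum (h : IsUniformSplitting μ V I) (k : ℕ) :
    Integrable (levelSqSum I k) μ ∧ ∫ ω, levelSqSum I k ω ∂μ = (2 / 3) ^ k := by
  have hsq (v : Fin k → Bool) : ∫ ω, I (List.ofFn v) ω ^ 2 ∂μ = (1 / 3) ^ k := by
    rw [h.integral_sq, List.length_ofFn]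
  -- a nonzero Bochner integral forces integrability
  have hint (v : Fin k → Bool) : Integrable (fun ω => I (List.ofFn v) ω ^ 2) μ :=
    .of_integral_ne_zero (by rw [hsq]; positivity)
  unfold levelSqSum
  refine ⟨integrable_finsetSum _ fun v _ => hint v, ?_⟩
  rw [integral_finsetSum _ fun v _ => hint v]
  simp only [hsq, Finset.sum_const, Finset.card_univ, Fintype.card_fun, Fintype.card_bool,
    Fintype.card_fin, nsmul_eq_mul]
  push_cast
  rw [← mul_pow]
  norm_num

lemma measure_levelSqSum_ge_le (h : IsUniformSplitting μ V I) {k : ℕ} (hk : k ≠ 0) :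
    μ {ω | (k : ℝ) ^ 2 * (2 / 3) ^ k ≤ levelSqSum I k ω} ≤ ENNReal.ofReal (1 / (k : ℝ) ^ 2) := by
  have := h.indep.isProbabilityMeasure
  obtain ⟨hint, hval⟩ := h.integral_levelSqSum k
  have hnonneg : 0 ≤ᵐ[μ] levelSqSum I k :=
    .of_forall fun ω => Finset.sum_nonneg fun v _ => sq_nonneg _
  refine (measure_ge_le_ofReal_integral_div hnonneg hint (by positivity)).trans_eq ?_
  rw [hval]
  congr 1
  field_simp

lemma ae_eventually_levelSqSum_lt (h : IsUniformSplitting μ V I) :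
    ∀ᵐ ω ∂μ, ∀ᶠ k in Filter.atTop, levelSqSum I k ω < (k : ℝ) ^ 2 * (2 / 3) ^ k := by
  -- the bound of Markov's inequality is useless at `k = 0`, so Borel–Cantelli runs over `k + 1`
  set s : ℕ → Set Ω := fun k =>
    {ω | ((k + 1 : ℕ) : ℝ) ^ 2 * (2 / 3) ^ (k + 1) ≤ levelSqSum I (k + 1) ω}
  have hsum : ∑' k, μ (s k) ≠ ∞ := by
    have hsummable : Summable fun k : ℕ => 1 / ((k + 1 : ℕ) : ℝ) ^ 2 :=
      (summable_nat_add_iff 1).mpr (Real.summable_one_div_nat_pow.mpr one_lt_two)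
    refine ne_top_of_le_ne_top ?_ (ENNReal.tsum_le_tsum fun k =>
      h.measure_levelSqSum_ge_le k.succ_ne_zero)
    rw [← ENNReal.ofReal_tsum_of_nonneg (fun k => by positivity) hsummable]
    exact ENNReal.ofReal_ne_top
  filter_upwards [ae_eventually_notMem hsum] with ω hω
  obtain ⟨N, hN⟩ := Filter.eventually_atTop.mp hω
  refine Filter.eventually_atTop.mpr ⟨N + 1, fun k hk => ?_⟩
  obtain ⟨k, rfl⟩ := Nat.exists_eq_add_of_le' (N.succ_pos.trans_le hk)
  simpa [s] using hN k (by omega)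

end IsUniformSplitting

end Probability

theorem interval_lengths_eventually_small_general
    (Ω : Type*) [MeasureSpace Ω]
    (V : List Bool → Ω → ℝ)
    (hViid : iIndepFun V ℙ)
    (hVunif : ∀ φ, Measure.map (V φ) ℙ = volume.restrict (Set.Icc (0:ℝ) 1))
    (I : List Bool → Ω → ℝ)
    (hI0 : ∀ ω, I [] ω = 1)
    (hIfalse : ∀ φ ω, I (φ ++ [false]) ω = I φ ω * V φ ω)
    (hItrue : ∀ φ ω, I (φ ++ [true]) ω = I φ ω * (1 - V φ ω)) :
    ∀ᵐ ω ∂ℙ, ∃ K₁ : ℕ, ∀ k : ℕ, K₁ ≤ k → ∀ φ : List Bool, φ.length = k →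
      I φ ω ≤ (k : ℝ) * (2 / 3 : ℝ) ^ ((k : ℝ) / 2) := by
  have hI : ∀ φ b ω, I (φ ++ [b]) ω = I φ ω * splitFraction b (V φ ω) := by
    rintro φ (_ | _) ω
    exacts [hIfalse φ ω, hItrue φ ω]
  have h : IsUniformSplitting ℙ V I := ⟨hViid, hVunif, hI0, hI⟩
  filter_upwards [h.ae_eventually_levelSqSum_lt] with ω hω
  obtain ⟨K₁, hK⟩ := Filter.eventually_atTop.mp hω
  refine ⟨K₁, fun k hk φ hφ => le_of_levelSqSum_lt (by positivity) ?_ hφ⟩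
  rw [mul_rpow_div_two_sq _ (by norm_num)]
  exact hK k hk

/-- There is an a.s. finite random level `K₁` such that for all `k ≥ K₁`, every
level-`k` interval of the recursive uniform splitting of `[0,1)` has length at most
`k (2/3)^{k/2}`; in particular `max_{α∈[0,1]} I_{α,k} ≤ k (2/3)^{k/2}`. -/
theorem interval_lengths_eventually_small
    (Ω : Type*) [MeasureSpace Ω] [IsProbabilityMeasure (ℙ : Measure Ω)]
    (V : List Bool → Ω → ℝ)
    (hVmeas : ∀ φ, Measurable (V φ))
    (hViid : iIndepFun V ℙ)
    (hVunif : ∀ φ, Measure.map (V φ) ℙ = volume.restrict (Set.Icc (0:ℝ) 1))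
    (I : List Bool → Ω → ℝ)
    (hI0 : ∀ ω, I [] ω = 1)
    (hIfalse : ∀ φ ω, I (φ ++ [false]) ω = I φ ω * V φ ω)
    (hItrue : ∀ φ ω, I (φ ++ [true]) ω = I φ ω * (1 - V φ ω)) :
    ∀ᵐ ω ∂ℙ, ∃ K₁ : ℕ, ∀ k : ℕ, K₁ ≤ k → ∀ φ : List Bool, φ.length = k →
      I φ ω ≤ (k : ℝ) * (2 / 3 : ℝ) ^ ((k : ℝ) / 2) :=
  interval_lengths_eventually_small_general Ω V hViid hVunif I hI0 hIfalse hItrue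
end

section
/- Let $(Z_\phi)_{\phi\in\{0,1\}^*}$ be random variables such that, conditionally on the interval lengths, $Z_\phi$ is centered Gaussian with variance $I_\phi - I_\phi^2$. Then almost surely $|Z_\phi| < 2\sqrt{|\phi| I_\phi}$ for all but finitely many $\phi$. -/
/-!
Almost surely every `V φ` lies in `(0, 1)`, so `I φ > 0`; as `I φ - I φ² ≤ I φ`, the event
`|Z φ| ≥ 2 √(|φ| I φ)` then forces `|N φ| ≥ 2 √|φ|`, which by the Chernoff bound for a standard
Gaussian has probability at most `2 e^{-2|φ|}`. There are `2^n` words of length `n` and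
`2 e^{-2} < 1`, so these probabilities are summable and Borel–Cantelli applies.
-/

open MeasureTheory ProbabilityTheory
open scoped NNReal
open Real

section GaussianTail

variable {Ω : Type*} {m : MeasurableSpace Ω} {μ : Measure Ω} {X : Ω → ℝ}

lemma ProbabilityTheory.HasSubgaussianMGF.measureReal_abs_ge_le {c : ℝ≥0}
    (h : HasSubgaussianMGF X c μ) {ε : ℝ} (hε : 0 ≤ ε) :
    μ.real {ω | ε ≤ |X ω|} ≤ 2 * exp (-ε ^ 2 / (2 * c)) := by
  have h_split : {ω | ε ≤ |X ω|} = {ω | ε ≤ X ω} ∪ {ω | ε ≤ (-X) ω} := by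
    ext ω
    simp only [Set.mem_ofPred_eq, Set.mem_union, Pi.neg_apply, le_abs]
  calc μ.real {ω | ε ≤ |X ω|}
      ≤ μ.real {ω | ε ≤ X ω} + μ.real {ω | ε ≤ (-X) ω} := h_split ▸ measureReal_union_le _ _
    _ ≤ exp (-ε ^ 2 / (2 * c)) + exp (-ε ^ 2 / (2 * c)) :=
        add_le_add (h.measure_ge_le hε) (h.neg.measure_ge_le hε)
    _ = 2 * exp (-ε ^ 2 / (2 * c)) := by ring

lemma ProbabilityTheory.hasSubgaussianMGF_of_map_eq_gaussianReal {v : ℝ≥0}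
    (hX : μ.map X = gaussianReal 0 v) : HasSubgaussianMGF X v μ := by
  have hX_meas : AEMeasurable X μ := .of_map_ne_zero (by simp [hX, NeZero.ne])
  rw [← HasSubgaussianMGF.id_map_iff hX_meas, hX]
  exact ⟨integrable_exp_mul_gaussianReal, fun t => by simp [mgf_id_gaussianReal]⟩

lemma ProbabilityTheory.measureReal_abs_ge_two_sqrt_le (hX : μ.map X = gaussianReal 0 1)
    {n : ℝ} (hn : 0 ≤ n) : μ.real {ω | 2 * √n ≤ |X ω|} ≤ 2 * exp (-2 * n) := by
  have h := (hasSubgaussianMGF_of_map_eq_gaussianReal hX).measureReal_abs_ge_le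
    (ε := 2 * √n) (by positivity)
  rwa [mul_pow, sq_sqrt hn, NNReal.coe_one, show -(2 ^ 2 * n) / (2 * 1) = -2 * n by ring] at h

end GaussianTail

lemma MeasureTheory.ae_finite_setOf_mem_of_summable_measureReal {α ι : Type*}
    [MeasurableSpace α] [Countable ι] {μ : Measure α} [IsFiniteMeasure μ] {s : ι → Set α}
    (hs : Summable fun i => μ.real (s i)) : ∀ᵐ x ∂μ, {i | x ∈ s i}.Finite := by
  refine ae_finite_setOfPred_mem ?_
  rw [tsum_congr fun i => (ofReal_measureReal (μ := μ) (s := s i)).symm,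
    ← ENNReal.ofReal_tsum_of_nonneg (fun _ => measureReal_nonneg) hs]
  exact ENNReal.ofReal_ne_top

lemma summable_comp_length {α : Type*} [Fintype α] {f : ℕ → ℝ} (hf : ∀ n, 0 ≤ f n)
    (h : Summable fun n => (Fintype.card α : ℝ) ^ n * f n) :
    Summable fun l : List α => f l.length := by
  rw [← (Equiv.sigmaFiberEquiv List.length).summable_iff]
  have (n : ℕ) : Fintype {l : List α // l.length = n} :=
    inferInstanceAs (Fintype (List.Vector α n))
  refine (summable_sigma_of_nonneg fun _ => hf _).2 ⟨fun n => .of_finite, ?_⟩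
  convert h using 2 with n
  have hcard : Fintype.card {l : List α // l.length = n} = Fintype.card α ^ n := by
    rw [← card_vector n]
    exact Fintype.card_congr' rfl
  rw [tsum_fintype, Finset.sum_congr rfl fun l _ => congrArg f l.2, Finset.sum_const,
    Finset.card_univ, hcard, nsmul_eq_mul, Nat.cast_pow]

lemma summable_exp_neg_two_mul_length :
    Summable fun φ : List Bool => exp (-2 * φ.length) := by
  have hq : 2 * exp (-2) < 1 := by
    have := add_one_lt_exp (show (2 : ℝ) ≠ 0 by norm_num)
    rw [exp_neg, ← div_eq_mul_inv, div_lt_one (exp_pos 2)]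
    linarith
  refine summable_comp_length (f := fun n => exp (-2 * n)) (fun n => (exp_pos _).le) ?_
  convert summable_geometric_of_lt_one (by positivity) hq using 1
  funext n
  rw [mul_pow, ← exp_nat_mul]
  simp [mul_comm]

lemma ae_mem_Ioo_of_map_eq_uniform {Ω : Type*} {m : MeasurableSpace Ω} {μ : Measure Ω}
    {X : Ω → ℝ} (hX : μ.map X = volume.restrict (Set.Icc 0 1)) :
    ∀ᵐ ω ∂μ, X ω ∈ Set.Ioo 0 1 := by
  have hX_meas : AEMeasurable X μ := .of_map_ne_zero (by simp [hX])
  refine ae_of_ae_map hX_meas ?_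
  rw [hX, ← Measure.restrict_congr_set Ioo_ae_eq_Icc]
  exact ae_restrict_mem measurableSet_Ioo

lemma pos_of_splitting {I V : List Bool → ℝ} (hI0 : I [] = 1)
    (hIfalse : ∀ φ, I (φ ++ [false]) = I φ * V φ)
    (hItrue : ∀ φ, I (φ ++ [true]) = I φ * (1 - V φ))
    (hV : ∀ φ, V φ ∈ Set.Ioo 0 1) (φ : List Bool) : 0 < I φ := by
  induction φ using List.reverseRecOn with
  | nil => rw [hI0]; exact one_pos
  | append_singleton φ b ih =>
    obtain ⟨hV0, hV1⟩ := hV φ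
    cases b
    · rw [hIfalse]; exact mul_pos ih hV0
    · rw [hItrue]; exact mul_pos ih (sub_pos.2 hV1)

lemma le_abs_of_two_sqrt_mul_le_abs {a n x : ℝ} (ha : 0 < a)
    (h : 2 * √(n * a) ≤ |√(a - a ^ 2) * x|) : 2 * √n ≤ |x| := by
  refine le_of_mul_le_mul_right ?_ (sqrt_pos.2 ha)
  calc 2 * √n * √a = 2 * √(n * a) := by rw [sqrt_mul' _ ha.le, mul_assoc]
    _ ≤ √(a - a ^ 2) * |x| := by rwa [abs_mul, abs_of_nonneg (sqrt_nonneg _)] at h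
    _ ≤ |x| * √a := by
      rw [mul_comm]
      gcongr
      exact sub_le_self _ (sq_nonneg a)

theorem Z_eventually_small_general
    (Ω : Type*) [MeasureSpace Ω] [IsProbabilityMeasure (ℙ : Measure Ω)]
    (V : List Bool → Ω → ℝ)
    (hVunif : ∀ φ, Measure.map (V φ) ℙ = volume.restrict (Set.Icc (0:ℝ) 1))
    (I : List Bool → Ω → ℝ)
    (hI0 : ∀ ω, I [] ω = 1)
    (hIfalse : ∀ φ ω, I (φ ++ [false]) ω = I φ ω * V φ ω)
    (hItrue : ∀ φ ω, I (φ ++ [true]) ω = I φ ω * (1 - V φ ω))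
    (N : List Bool → Ω → ℝ)
    (hNlaw : ∀ φ, Measure.map (N φ) ℙ = gaussianReal 0 1)
    (Z : List Bool → Ω → ℝ)
    (hZ : ∀ φ ω, Z φ ω = Real.sqrt (I φ ω - (I φ ω) ^ 2) * N φ ω) :
    ∀ᵐ ω ∂ℙ,
      {φ : List Bool | ¬ |Z φ ω| < 2 * Real.sqrt ((φ.length : ℝ) * I φ ω)}.Finite := by
  have hN_large : ∀ᵐ ω ∂ℙ, {φ : List Bool | 2 * √φ.length ≤ |N φ ω|}.Finite :=
    ae_finite_setOf_mem_of_summable_measureReal <|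
      (summable_exp_neg_two_mul_length.mul_left 2).of_nonneg_of_le (fun _ => measureReal_nonneg)
        fun φ => measureReal_abs_ge_two_sqrt_le (hNlaw φ) φ.length.cast_nonneg
  have hV_mem : ∀ᵐ ω ∂ℙ, ∀ φ, V φ ω ∈ Set.Ioo 0 1 :=
    ae_all_iff.2 fun φ => ae_mem_Ioo_of_map_eq_uniform (hVunif φ)
  filter_upwards [hN_large, hV_mem] with ω hfin hV
  refine hfin.subset fun φ hφ => ?_
  rw [Set.mem_ofPred_eq, hZ, not_lt] at hφ
  exact le_abs_of_two_sqrt_mul_le_abs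
    (pos_of_splitting (I := (I · ω)) (hI0 ω) (hIfalse · ω) (hItrue · ω) hV φ) hφ

/-- If, conditionally on the interval lengths `I φ` of the recursive uniform splitting
of `[0,1)`, the random variables `Z φ` are centred Gaussian with variance
`I φ - I φ ^ 2` (represented as `Z φ = √(I φ - I φ²) · N φ` with `N φ` i.i.d. standard
normals independent of the splitting), then almost surely `|Z φ| < 2 √(|φ| I φ)` for
all but finitely many words `φ`. -/
theorem Z_eventually_small
    (Ω : Type*) [MeasureSpace Ω] [IsProbabilityMeasure (ℙ : Measure Ω)]
    (V : List Bool → Ω → ℝ)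
    (hVmeas : ∀ φ, Measurable (V φ))
    (hViid : iIndepFun V ℙ)
    (hVunif : ∀ φ, Measure.map (V φ) ℙ = volume.restrict (Set.Icc (0:ℝ) 1))
    (I : List Bool → Ω → ℝ)
    (hI0 : ∀ ω, I [] ω = 1)
    (hIfalse : ∀ φ ω, I (φ ++ [false]) ω = I φ ω * V φ ω)
    (hItrue : ∀ φ ω, I (φ ++ [true]) ω = I φ ω * (1 - V φ ω))
    (N : List Bool → Ω → ℝ)
    (hNmeas : ∀ φ, Measurable (N φ))
    (hNiid : iIndepFun N ℙ)
    (hNlaw : ∀ φ, Measure.map (N φ) ℙ = gaussianReal 0 1)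
    (hNV : IndepFun (fun ω => fun φ : List Bool => N φ ω)
      (fun ω => fun φ : List Bool => V φ ω) ℙ)
    (Z : List Bool → Ω → ℝ)
    (hZ : ∀ φ ω, Z φ ω = Real.sqrt (I φ ω - (I φ ω) ^ 2) * N φ ω) :
    ∀ᵐ ω ∂ℙ,
      {φ : List Bool | ¬ |Z φ ω| < 2 * Real.sqrt ((φ.length : ℝ) * I φ ω)}.Finite :=
  Z_eventually_small_general Ω V hVunif I hI0 hIfalse hItrue N hNlaw Z hZ
end

section
/- Let $(Z_\phi)_{\phi\in\{0,1\}^*}$ be, conditionally on the interval lengths, jointly centered Gaussian with covariances $\mathbb{E}[Z_\phi Z_\psi\mid\mathcal{F}_\infty] = ((R_\phi\wedge R_\psi) - (L_\phi\vee L_\psi))^+ - I_\phi I_\psi$. Then the random series $\sum_{\phi\in\{0,1\}^*} Z_\phi\,\mathbf{1}_{[L_\phi,R_\phi)}$ converges uniformly on $[0,1]$ almost surely. -/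
open MeasureTheory ProbabilityTheory
open scoped ENNReal

/-!
Conditionally on the splitting, `Z φ` is centred Gaussian with variance `I - I² ≤ I`, where
`I = R φ - L φ` is a product of `|φ|` independent factors `V` or `1 - V`, so `E[I²] = 3^(-|φ|)`.
A conditional Chernoff bound on `{I ≤ ε}` and Markov's inequality for `I²` on its complement,
summed over the `2^k` words of length `k` with `ε = (11/12)^(2k)` and threshold `2k (11/12)^k`,
give by Borel–Cantelli that almost surely `|Z φ| < 2k (11/12)^k` for all words of all large
lengths `k`. The intervals of one level are disjoint, so the level-`k` term of the series is
bounded by this summable sequence uniformly in `α`, and the Weierstrass M-test applies.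
-/

open Real

def childRatio (b : Bool) (x : ℝ) : ℝ := if b then 1 - x else x

lemma childRatio_nonneg {x : ℝ} (hx : x ∈ Set.Icc 0 1) (b : Bool) : 0 ≤ childRatio b x := by
  cases b <;> simp [childRatio, hx.1, hx.2]

lemma continuous_childRatio (b : Bool) : Continuous (childRatio b) := by
  cases b
  exacts [continuous_id, continuous_const.sub continuous_id]

lemma integral_childRatio_sq (b : Bool) : ∫ x in Set.Icc (0 : ℝ) 1, childRatio b x ^ 2 = 1 / 3 := by
  rw [integral_Icc_eq_integral_Ioc, ← intervalIntegral.integral_of_le zero_le_one]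
  cases b
  · norm_num [childRatio]
  · norm_num [childRatio, intervalIntegral.integral_comp_sub_left (fun x => x ^ 2)]

structure IsSplitting (v L R : List Bool → ℝ) : Prop where
  left_nil : L [] = 0
  right_nil : R [] = 1
  left_append_false : ∀ φ, L (φ ++ [false]) = L φ
  right_append_true : ∀ φ, R (φ ++ [true]) = R φ
  right_append_false : ∀ φ, R (φ ++ [false]) = L φ + (R φ - L φ) * v φ
  left_append_true : ∀ φ, L (φ ++ [true]) = R (φ ++ [false])

namespace IsSplitting

variable {v L R : List Bool → ℝ} (h : IsSplitting v L R)
include h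

lemma sub_append (φ : List Bool) (b : Bool) :
    R (φ ++ [b]) - L (φ ++ [b]) = (R φ - L φ) * childRatio b (v φ) := by
  cases b
  · rw [h.left_append_false, h.right_append_false]
    simp [childRatio]
  · rw [h.left_append_true, h.right_append_true, h.right_append_false]
    simp only [childRatio, if_true]
    ring

lemma sub_eq_prod (φ : List Bool) :
    R φ - L φ = ∏ j : Fin φ.length, childRatio φ[j] (v (φ.take j)) := by
  suffices R φ - L φ = ∏ j ∈ Finset.range φ.length, childRatio (φ.getD j false) (v (φ.take j)) by
    rw [this, Finset.prod_range]
    simp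
  induction φ using List.reverseRecOn with
  | nil => simp [h.left_nil, h.right_nil]
  | append_singleton φ b ih =>
    rw [h.sub_append, ih, List.length_append, List.length_singleton, Finset.prod_range_succ]
    congr 1
    · refine Finset.prod_congr rfl fun j hj => ?_
      have hj : j < φ.length := Finset.mem_range.1 hj
      rw [List.getD_append _ _ _ _ hj, List.take_append_of_le_length hj.le]
    · simp

lemma left_le_right (hv : ∀ φ, v φ ∈ Set.Icc 0 1) (φ : List Bool) : L φ ≤ R φ := by
  rw [← sub_nonneg]
  induction φ using List.reverseRecOn with
  | nil => simp [h.left_nil, h.right_nil]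
  | append_singleton φ b ih =>
    rw [h.sub_append]
    exact mul_nonneg ih (childRatio_nonneg (hv φ) b)

lemma Ico_append_subset (hv : ∀ φ, v φ ∈ Set.Icc 0 1) (φ : List Bool) (b : Bool) :
    Set.Ico (L (φ ++ [b])) (R (φ ++ [b])) ⊆ Set.Ico (L φ) (R φ) := by
  have hLR := h.left_le_right hv φ
  have ⟨hv0, hv1⟩ := hv φ
  cases b
  · rw [h.left_append_false, h.right_append_false]
    exact Set.Ico_subset_Ico_right (by nlinarith)
  · rw [h.left_append_true, h.right_append_true, h.right_append_false]
    exact Set.Ico_subset_Ico_left (by nlinarith)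

lemma disjoint_Ico (hv : ∀ φ, v φ ∈ Set.Icc 0 1) {φ ψ : List Bool} (hlen : φ.length = ψ.length)
    (hne : φ ≠ ψ) : Disjoint (Set.Ico (L φ) (R φ)) (Set.Ico (L ψ) (R ψ)) := by
  induction φ using List.reverseRecOn generalizing ψ with
  | nil => exact absurd (List.length_eq_zero_iff.1 hlen.symm).symm hne
  | append_singleton φ a ih =>
    obtain ⟨ψ, c, rfl⟩ : ∃ ψ' c, ψ = ψ' ++ [c] := by
      rcases List.eq_nil_or_concat' ψ with rfl | hψ
      · simp at hlen
      · exact hψ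
    have hlen' : φ.length = ψ.length := by simpa using hlen
    by_cases hpar : φ = ψ
    · subst hpar
      cases a <;> cases c <;> simp only [ne_eq, not_true_eq_false] at hne <;>
        rw [h.left_append_true]
      · exact Set.Ico_disjoint_Ico_same
      · exact Set.Ico_disjoint_Ico_same.symm
    · exact (ih hlen' hpar).mono (h.Ico_append_subset hv φ a) (h.Ico_append_subset hv ψ c)

end IsSplitting

lemma abs_sum_ite_mem_le {ι α : Type*} [Fintype ι] {s : ι → Set α}
    (hs : Pairwise (Function.onFun Disjoint s)) {z : ι → ℝ} {M : ℝ} (hM : 0 ≤ M)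
    (hz : ∀ i, |z i| ≤ M) (a : α) [∀ i, Decidable (a ∈ s i)] :
    |∑ i, if a ∈ s i then z i else 0| ≤ M := by
  by_cases ha : ∃ i, a ∈ s i
  · obtain ⟨i, hi⟩ := ha
    rw [Finset.sum_eq_single i (fun j _ hji => if_neg fun hj => (hs hji).ne_of_mem hj hi rfl)
      (by simp), if_pos hi]
    exact hz i
  · simp only [not_exists] at ha
    simpa [ha] using hM

section ConditionalChernoff

variable {Ω : Type*} {m m0 : MeasurableSpace Ω} {μ : Measure Ω}

lemma measureReal_ge_inter_le_of_condExp_exp_le [IsFiniteMeasure μ] (hm : m ≤ m0) {X : Ω → ℝ}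
    (hX : Integrable (fun ω => exp (X ω)) μ) {S : Set Ω} (hS : MeasurableSet[m] S) {B : ℝ}
    (hB : ∀ᵐ ω ∂μ, ω ∈ S → μ[fun ω => exp (X ω) | m] ω ≤ B) (t : ℝ) :
    μ.real ({ω | t ≤ X ω} ∩ S) ≤ exp (-t) * B * μ.real S := by
  have hS0 : MeasurableSet S := hm S hS
  have hMarkov := mul_meas_ge_le_integral_of_nonneg (μ := μ.restrict S)
    (ae_of_all _ fun ω => (exp_pos (X ω)).le) hX.restrict (exp t)
  have hset : {ω | exp t ≤ exp (X ω)} ∩ S = {ω | t ≤ X ω} ∩ S := by simp only [exp_le_exp]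
  rw [measureReal_restrict_apply' hS0, hset, ← setIntegral_condExp hm hX hS] at hMarkov
  have hcond : ∫ ω in S, μ[fun ω => exp (X ω) | m] ω ∂μ ≤ B * μ.real S := by
    calc ∫ ω in S, μ[fun ω => exp (X ω) | m] ω ∂μ ≤ ∫ _ in S, B ∂μ :=
          integral_mono_ae integrable_condExp.integrableOn (integrable_const B)
            ((ae_restrict_iff' hS0).2 hB)
      _ = B * μ.real S := by rw [setIntegral_const, smul_eq_mul, mul_comm]
  rw [exp_neg, mul_assoc, ← div_eq_inv_mul, le_div_iff₀ (exp_pos t)]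
  linarith

lemma measureReal_ge_inter_le_exp [IsProbabilityMeasure μ] (hm : m ≤ m0) {X σ2 : Ω → ℝ}
    (hX : ∀ c : ℝ, μ[fun ω => exp (c * X ω) | m] =ᵐ[μ] fun ω => exp (c ^ 2 / 2 * σ2 ω))
    {S : Set Ω} (hS : MeasurableSet[m] S) {ε : ℝ} (hε : 0 < ε) (hσ2 : ∀ ω ∈ S, σ2 ω ≤ ε)
    {t : ℝ} (ht : 0 ≤ t) :
    μ.real ({ω | t ≤ X ω} ∩ S) ≤ exp (-(t ^ 2 / (2 * ε))) := by
  set c := t / ε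
  have hc : 0 ≤ c := div_nonneg ht hε.le
  -- the conditional expectation of a non-integrable function is `0`, never a positive exponential
  have hint : Integrable (fun ω => exp (c * X ω)) μ := by
    by_contra hnot
    have hzero := hX c
    rw [condExp_of_not_integrable hnot] at hzero
    obtain ⟨ω, hω⟩ := hzero.exists
    exact (exp_pos _).ne' hω.symm
  have hB : ∀ᵐ ω ∂μ, ω ∈ S → μ[fun ω => exp (c * X ω) | m] ω ≤ exp (c ^ 2 / 2 * ε) := by
    filter_upwards [hX c] with ω hω hωS
    rw [hω]
    gcongr
    exact hσ2 ω hωS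
  calc μ.real ({ω | t ≤ X ω} ∩ S) ≤ μ.real ({ω | c * t ≤ c * X ω} ∩ S) :=
        measureReal_mono (Set.inter_subset_inter_left _ fun ω hω =>
          mul_le_mul_of_nonneg_left hω hc)
    _ ≤ exp (-(c * t)) * exp (c ^ 2 / 2 * ε) * μ.real S :=
        measureReal_ge_inter_le_of_condExp_exp_le hm hint hS hB _
    _ ≤ exp (-(c * t)) * exp (c ^ 2 / 2 * ε) :=
        mul_le_of_le_one_right (by positivity) measureReal_le_one
    _ = exp (-(t ^ 2 / (2 * ε))) := by
        rw [← exp_add]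
        congr 1
        simp only [c]
        field_simp
        ring

lemma measureReal_abs_ge_le [IsProbabilityMeasure μ] (hm : m ≤ m0) {X σ2 : Ω → ℝ}
    (hX : ∀ c : ℝ, μ[fun ω => exp (c * X ω) | m] =ᵐ[μ] fun ω => exp (c ^ 2 / 2 * σ2 ω))
    {S : Set Ω} (hS : MeasurableSet[m] S) {ε : ℝ} (hε : 0 < ε) (hσ2 : ∀ ω ∈ S, σ2 ω ≤ ε)
    {t : ℝ} (ht : 0 ≤ t) :
    μ.real {ω | t ≤ |X ω|} ≤ 2 * exp (-(t ^ 2 / (2 * ε))) + μ.real Sᶜ := by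
  have hnegX : ∀ c : ℝ,
      μ[fun ω => exp (c * -X ω) | m] =ᵐ[μ] fun ω => exp (c ^ 2 / 2 * σ2 ω) := fun c => by
    simpa only [neg_mul, mul_neg, neg_sq] using hX (-c)
  have hcover : {ω | t ≤ |X ω|} ⊆
      ({ω | t ≤ X ω} ∩ S ∪ {ω | t ≤ -X ω} ∩ S) ∪ Sᶜ := fun ω hω => by
    by_cases hωS : ω ∈ S
    · rcases le_abs.1 (show t ≤ |X ω| from hω) with h | h
      exacts [Or.inl (Or.inl ⟨h, hωS⟩), Or.inl (Or.inr ⟨h, hωS⟩)]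
    · exact Or.inr hωS
  calc μ.real {ω | t ≤ |X ω|}
      ≤ μ.real ({ω | t ≤ X ω} ∩ S) + μ.real ({ω | t ≤ -X ω} ∩ S) + μ.real Sᶜ :=
        (measureReal_mono hcover).trans <|
          (measureReal_union_le _ _).trans (add_le_add_left (measureReal_union_le _ _) _)
    _ ≤ 2 * exp (-(t ^ 2 / (2 * ε))) + μ.real Sᶜ := by
        have h₁ := measureReal_ge_inter_le_exp hm hX hS hε hσ2 ht
        have h₂ := measureReal_ge_inter_le_exp hm hnegX hS hε hσ2 ht
        linarith

end ConditionalChernoff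

lemma measureReal_lt_le_integral_sq_div_sq {Ω : Type*} [MeasurableSpace Ω] {μ : Measure Ω}
    [IsFiniteMeasure μ] {X : Ω → ℝ} (hX : Integrable (fun ω => X ω ^ 2) μ) {ε : ℝ} (hε : 0 < ε) :
    μ.real {ω | ε < X ω} ≤ (∫ ω, X ω ^ 2 ∂μ) / ε ^ 2 := by
  rw [le_div_iff₀ (by positivity), mul_comm]
  calc ε ^ 2 * μ.real {ω | ε < X ω} ≤ ε ^ 2 * μ.real {ω | ε ^ 2 ≤ X ω ^ 2} := by
        refine mul_le_mul_of_nonneg_left (measureReal_mono fun ω (hω : ε < X ω) => ?_) ?_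
        exacts [pow_le_pow_left₀ hε.le hω.le 2, by positivity]
    _ ≤ ∫ ω, X ω ^ 2 ∂μ :=
        mul_meas_ge_le_integral_of_nonneg (ae_of_all _ fun ω => sq_nonneg (X ω)) hX _

lemma integral_sub_sq_of_isSplitting {Ω : Type*} {mΩ : MeasurableSpace Ω} {μ : Measure Ω}
    {V L R : List Bool → Ω → ℝ} (hV : ∀ φ, Measurable (V φ)) (hindep : iIndepFun V μ)
    (hunif : ∀ φ, μ.map (V φ) = volume.restrict (Set.Icc (0 : ℝ) 1))
    (hsplit : ∀ ω, IsSplitting (V · ω) (L · ω) (R · ω)) (φ : List Bool) :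
    ∫ ω, (R φ ω - L φ ω) ^ 2 ∂μ = (1 / 3) ^ φ.length := by
  have hprefix : Function.Injective fun j : Fin φ.length => φ.take j := fun i j hij => by
    have := congrArg List.length hij
    simp only [List.length_take, Nat.min_eq_left i.isLt.le, Nat.min_eq_left j.isLt.le] at this
    exact Fin.ext this
  have hfactor (ψ : List Bool) (b : Bool) : ∫ ω, childRatio b (V ψ ω) ^ 2 ∂μ = 1 / 3 := by
    rw [← integral_map (f := fun x => childRatio b x ^ 2) (hV ψ).aemeasurable
      ((continuous_childRatio b).pow 2).aestronglyMeasurable, hunif, integral_childRatio_sq]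
  have hprod : ∀ ω, (R φ ω - L φ ω) ^ 2 =
      ∏ j : Fin φ.length, childRatio φ[j] (V (φ.take j) ω) ^ 2 := fun ω => by
    rw [(hsplit ω).sub_eq_prod φ, Finset.prod_pow]
  have hprefixes : iIndepFun (fun j : Fin φ.length => V (φ.take j)) μ := hindep.precomp hprefix
  have hfactorize := hprefixes.integral_fun_prod_comp
    (f := fun (j : Fin φ.length) (x : ℝ) => childRatio φ[j] x ^ 2)
    (fun _ => (hV _).aemeasurable)
    (fun j => ((continuous_childRatio φ[j]).pow 2).aestronglyMeasurable)
  simp_rw [hprod, hfactorize, hfactor, Finset.prod_const, Finset.card_univ, Fintype.card_fin]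

lemma ae_eventually_notMem_of_measureReal_le {α : Type*} [MeasurableSpace α] {μ : Measure α}
    [IsFiniteMeasure μ] {s : ℕ → Set α} {p : ℕ → ℝ} (hp : Summable p)
    (hs : ∀ n, μ.real (s n) ≤ p n) : ∀ᵐ x ∂μ, ∀ᶠ n in Filter.atTop, x ∉ s n := by
  have hp0 : ∀ n, 0 ≤ p n := fun n => measureReal_nonneg.trans (hs n)
  refine ae_eventually_notMem (ne_top_of_le_ne_top (ENNReal.ofReal_ne_top (r := ∑' n, p n)) ?_)
  rw [ENNReal.ofReal_tsum_of_nonneg hp0 hp]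
  exact ENNReal.tsum_le_tsum fun n => by
    rw [← ofReal_measureReal]
    exact ENNReal.ofReal_le_ofReal (hs n)

lemma measureReal_abs_ge_le_of_integral_sq_eq {Ω : Type*} {m m0 : MeasurableSpace Ω}
    {μ : Measure Ω} [IsProbabilityMeasure μ] (hm : m ≤ m0) {X I : Ω → ℝ}
    (hX : ∀ c : ℝ, μ[fun ω => exp (c * X ω) | m] =ᵐ[μ]
      fun ω => exp (c ^ 2 / 2 * (max (I ω) 0 - I ω ^ 2)))
    (hI : Measurable[m] I) {q : ℝ} (hq : 0 < q) (hI2 : ∫ ω, I ω ^ 2 ∂μ = q)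
    {ε : ℝ} (hε : 0 < ε) {t : ℝ} (ht : 0 ≤ t) :
    μ.real {ω | t ≤ |X ω|} ≤ 2 * exp (-(t ^ 2 / (2 * ε))) + q / ε ^ 2 := by
  have hσ2 : ∀ ω ∈ {ω | I ω ≤ ε}, max (I ω) 0 - I ω ^ 2 ≤ ε := fun ω (hω : I ω ≤ ε) => by
    nlinarith [max_le hω hε.le, sq_nonneg (I ω)]
  have hI2int : Integrable (fun ω => I ω ^ 2) μ := .of_integral_ne_zero (hI2 ▸ hq.ne')
  have hlarge := measureReal_lt_le_integral_sq_div_sq hI2int hε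
  rw [hI2] at hlarge
  calc μ.real {ω | t ≤ |X ω|} ≤ 2 * exp (-(t ^ 2 / (2 * ε))) + μ.real {ω | I ω ≤ ε}ᶜ :=
        measureReal_abs_ge_le hm hX (measurableSet_le hI measurable_const) hε hσ2 ht
    _ ≤ 2 * exp (-(t ^ 2 / (2 * ε))) + q / ε ^ 2 := by
        simp only [Set.compl_ofPred, not_le]
        linarith

lemma summable_levelBound :
    Summable fun k : ℕ => 2 ^ k * (2 * exp (-(2 * k ^ 2)) + (1 / 3) ^ k / ((11 / 12) ^ k) ^ 4) := by
  have h2e : 2 * exp (-2) < 1 := by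
    rw [exp_neg, ← div_eq_mul_inv, div_lt_one (exp_pos 2)]
    linarith [add_one_lt_exp (x := (2 : ℝ)) (by norm_num)]
  have hgeom : Summable fun k : ℕ => 2 * (2 * exp (-2)) ^ k + (2 / 3 * (12 / 11) ^ 4) ^ k :=
    ((summable_geometric_of_lt_one (by positivity) h2e).mul_left 2).add
      (summable_geometric_of_lt_one (by positivity) (by norm_num))
  refine hgeom.of_nonneg_of_le (fun k => by positivity) fun k => ?_
  have hk : exp (-(2 * k ^ 2)) ≤ exp (-2) ^ k := by
    rw [← exp_nat_mul]
    gcongr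
    have : (k : ℝ) ≤ k ^ 2 := by exact_mod_cast Nat.le_self_pow two_ne_zero k
    linarith
  have hratio :
      (2 : ℝ) ^ k * ((1 / 3) ^ k / ((11 / 12) ^ k) ^ 4) = (2 / 3 * (12 / 11) ^ 4) ^ k := by
    rw [pow_right_comm, ← div_pow, ← mul_pow]
    norm_num
  rw [mul_add, hratio, mul_left_comm, mul_pow 2 (exp (-2))]
  gcongr

lemma ae_eventually_forall_abs_lt {Ω : Type*} {m m0 : MeasurableSpace Ω} {μ : Measure Ω}
    [IsProbabilityMeasure μ] (hm : m ≤ m0) {Z I : List Bool → Ω → ℝ}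
    (hZ : ∀ φ (c : ℝ), μ[fun ω => exp (c * Z φ ω) | m] =ᵐ[μ]
      fun ω => exp (c ^ 2 / 2 * (max (I φ ω) 0 - I φ ω ^ 2)))
    (hI : ∀ φ, Measurable[m] (I φ)) (hI2 : ∀ φ, ∫ ω, I φ ω ^ 2 ∂μ = (1 / 3) ^ φ.length) :
    ∀ᵐ ω ∂μ, ∀ᶠ k in Filter.atTop, ∀ b : Fin k → Bool,
      |Z (List.ofFn b) ω| < 2 * k * (11 / 12) ^ k := by
  set p : ℕ → ℝ := fun k => 2 ^ k * (2 * exp (-(2 * k ^ 2)) + (1 / 3) ^ k / ((11 / 12) ^ k) ^ 4)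
  have hword (k : ℕ) (b : Fin k → Bool) :
      μ.real {ω | 2 * k * (11 / 12) ^ k ≤ |Z (List.ofFn b) ω|} ≤
        2 * exp (-(2 * k ^ 2)) + (1 / 3) ^ k / ((11 / 12) ^ k) ^ 4 := by
    have := measureReal_abs_ge_le_of_integral_sq_eq hm (hZ (List.ofFn b)) (hI _) (by positivity)
      (hI2 _) (ε := ((11 / 12) ^ k) ^ 2) (by positivity) (t := 2 * k * (11 / 12) ^ k)
      (by positivity)
    have hexponent : (2 * k * (11 / 12 : ℝ) ^ k) ^ 2 / (2 * ((11 / 12) ^ k) ^ 2) = 2 * k ^ 2 := by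
      field_simp
    refine this.trans_eq ?_
    rw [hexponent, List.length_ofFn]
    ring
  have hlevel (k : ℕ) :
      μ.real {ω | ∃ b : Fin k → Bool, 2 * k * (11 / 12) ^ k ≤ |Z (List.ofFn b) ω|} ≤ p k := by
    rw [Set.ofPred_exists]
    refine (measureReal_iUnion_fintype_le _).trans
      ((Finset.sum_le_sum fun b _ => hword k b).trans_eq ?_)
    rw [Finset.sum_const, Finset.card_univ, Fintype.card_fun, Fintype.card_bool, Fintype.card_fin,
      nsmul_eq_mul]
    push_cast
    rfl
  filter_upwards [ae_eventually_notMem_of_measureReal_le summable_levelBound hlevel] with ω hω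
  exact hω.mono fun k hk b => not_le.1 fun h => hk ⟨b, h⟩

lemma exists_tendstoUniformlyOn_sum_range_succ {β : Type*} {f : ℕ → β → ℝ} {u : ℕ → ℝ}
    (hu : Summable u) {s : Set β} (hfu : ∀ᶠ n in Filter.atTop, ∀ x ∈ s, ‖f n x‖ ≤ u n) :
    ∃ G : β → ℝ,
      TendstoUniformlyOn (fun K x => ∑ k ∈ Finset.range (K + 1), f k x) G Filter.atTop s :=
  ⟨_, fun v hv => (Filter.tendsto_add_atTop_nat 1).eventually
    (tendstoUniformlyOn_tsum_nat_eventually hu hfu v hv)⟩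

theorem limit_process_series_converges_uniformly_general
    (Ω : Type*) [MeasureSpace Ω] [IsProbabilityMeasure (ℙ : Measure Ω)]
    (V : List Bool → Ω → ℝ)
    (hVmeas : ∀ φ, Measurable (V φ))
    (hViid : iIndepFun V ℙ)
    (hVunif : ∀ φ, Measure.map (V φ) ℙ = volume.restrict (Set.Icc (0:ℝ) 1))
    (L R : List Bool → Ω → ℝ)
    (hL0 : ∀ ω, L [] ω = 0) (hR0 : ∀ ω, R [] ω = 1)
    (hLf : ∀ φ ω, L (φ ++ [false]) ω = L φ ω)
    (hRt : ∀ φ ω, R (φ ++ [true]) ω = R φ ω)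
    (hRf : ∀ φ ω, R (φ ++ [false]) ω = L φ ω + (R φ ω - L φ ω) * V φ ω)
    (hLt : ∀ φ ω, L (φ ++ [true]) ω = R (φ ++ [false]) ω)
    (Z : List Bool → Ω → ℝ)
    (F : MeasurableSpace Ω)
    (hF : F = ⨆ φ : List Bool,
      MeasurableSpace.comap (fun ω => R φ ω - L φ ω) inferInstance)
    (hFle : F ≤ MeasureSpace.toMeasurableSpace)
    (hZgauss : ∀ (s : Finset (List Bool)) (c : List Bool → ℝ),
      ℙ[fun ω => Real.exp (∑ φ ∈ s, c φ * Z φ ω) | F] =ᵐ[ℙ]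
        fun ω => Real.exp ((1 / 2) * ∑ φ ∈ s, ∑ ψ ∈ s, c φ * c ψ *
          (max (min (R φ ω) (R ψ ω) - max (L φ ω) (L ψ ω)) 0 -
            (R φ ω - L φ ω) * (R ψ ω - L ψ ω)))) :
    ∀ᵐ ω ∂ℙ, ∃ G : ℝ → ℝ,
      TendstoUniformlyOn
        (fun K : ℕ => fun α : ℝ =>
          ∑ k ∈ Finset.range (K + 1), ∑ b : Fin k → Bool,
            (if α ∈ Set.Ico (L (List.ofFn b) ω) (R (List.ofFn b) ω)
              then Z (List.ofFn b) ω else 0))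
        G Filter.atTop (Set.Icc (0:ℝ) 1) := by
  have hsplit : ∀ ω, IsSplitting (V · ω) (L · ω) (R · ω) := fun ω =>
    ⟨hL0 ω, hR0 ω, (hLf · ω), (hRt · ω), (hRf · ω), (hLt · ω)⟩
  have hV01 : ∀ᵐ ω ∂ℙ, ∀ φ, V φ ω ∈ Set.Icc (0 : ℝ) 1 := ae_all_iff.2 fun φ =>
    ae_of_ae_map (hVmeas φ).aemeasurable (hVunif φ ▸ ae_restrict_mem measurableSet_Icc)
  have hZ : ∀ φ (c : ℝ), ℙ[fun ω => Real.exp (c * Z φ ω) | F] =ᵐ[ℙ] fun ω =>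
      Real.exp (c ^ 2 / 2 * (max (R φ ω - L φ ω) 0 - (R φ ω - L φ ω) ^ 2)) := fun φ c => by
    convert hZgauss {φ} fun _ => c using 3 with ω
    · simp
    · simp only [Finset.sum_singleton, min_self, max_self]
      ring
  have hIF : ∀ φ, Measurable[F] fun ω => R φ ω - L φ ω := fun φ =>
    measurable_iff_comap_le (m₁ := F).2 (hF ▸ le_iSup (fun ψ => MeasurableSpace.comap
      (fun ω => R ψ ω - L ψ ω) (inferInstance : MeasurableSpace ℝ)) φ)
  filter_upwards [hV01, ae_eventually_forall_abs_lt hFle hZ hIF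
    (integral_sub_sq_of_isSplitting hVmeas hViid hVunif hsplit)] with ω hω hZω
  have hbound : Summable fun k : ℕ => 2 * k * (11 / 12 : ℝ) ^ k := by
    simpa [mul_assoc] using
      (summable_pow_mul_geometric_of_norm_lt_one 1 (r := (11 / 12 : ℝ)) (by norm_num)).mul_left 2
  refine exists_tendstoUniformlyOn_sum_range_succ hbound (hZω.mono fun k hk α _ => ?_)
  exact abs_sum_ite_mem_le
    (fun b b' hne => (hsplit ω).disjoint_Ico hω (by simp) (List.ofFn_injective.ne hne))
    (by positivity) (fun b => (hk b).le) α

/-- If, conditionally on the interval lengths of the recursive uniform splitting of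
`[0,1)`, the family `(Z φ)` is jointly centred Gaussian with covariances
`E[Z_φ Z_ψ ∣ F∞] = ((R_φ ∧ R_ψ) - (L_φ ∨ L_ψ))⁺ - I_φ I_ψ` (encoded via the
conditional moment generating function of finite linear combinations), then the
random series `∑_φ Z_φ 1_{[L_φ,R_φ)}` converges uniformly on `[0,1]` almost surely. -/
theorem limit_process_series_converges_uniformly
    (Ω : Type*) [MeasureSpace Ω] [IsProbabilityMeasure (ℙ : Measure Ω)]
    (V : List Bool → Ω → ℝ)
    (hVmeas : ∀ φ, Measurable (V φ))
    (hViid : iIndepFun V ℙ)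
    (hVunif : ∀ φ, Measure.map (V φ) ℙ = volume.restrict (Set.Icc (0:ℝ) 1))
    (L R : List Bool → Ω → ℝ)
    (hL0 : ∀ ω, L [] ω = 0) (hR0 : ∀ ω, R [] ω = 1)
    (hLf : ∀ φ ω, L (φ ++ [false]) ω = L φ ω)
    (hRt : ∀ φ ω, R (φ ++ [true]) ω = R φ ω)
    (hRf : ∀ φ ω, R (φ ++ [false]) ω = L φ ω + (R φ ω - L φ ω) * V φ ω)
    (hLt : ∀ φ ω, L (φ ++ [true]) ω = R (φ ++ [false]) ω)
    (Z : List Bool → Ω → ℝ)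
    (hZmeas : ∀ φ, Measurable (Z φ))
    (F : MeasurableSpace Ω)
    (hF : F = ⨆ φ : List Bool,
      MeasurableSpace.comap (fun ω => R φ ω - L φ ω) inferInstance)
    (hFle : F ≤ MeasureSpace.toMeasurableSpace)
    (hZgauss : ∀ (s : Finset (List Bool)) (c : List Bool → ℝ),
      ℙ[fun ω => Real.exp (∑ φ ∈ s, c φ * Z φ ω) | F] =ᵐ[ℙ]
        fun ω => Real.exp ((1 / 2) * ∑ φ ∈ s, ∑ ψ ∈ s, c φ * c ψ *
          (max (min (R φ ω) (R ψ ω) - max (L φ ω) (L ψ ω)) 0 -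
            (R φ ω - L φ ω) * (R ψ ω - L ψ ω)))) :
    ∀ᵐ ω ∂ℙ, ∃ G : ℝ → ℝ,
      TendstoUniformlyOn
        (fun K : ℕ => fun α : ℝ =>
          ∑ k ∈ Finset.range (K + 1), ∑ b : Fin k → Bool,
            (if α ∈ Set.Ico (L (List.ofFn b) ω) (R (List.ofFn b) ω)
              then Z (List.ofFn b) ω else 0))
        G Filter.atTop (Set.Icc (0:ℝ) 1) :=
  limit_process_series_converges_uniformly_general Ω V hVmeas hViid hVunif L R hL0 hR0 hLf hRt hRf
    hLt Z F hF hFle hZgauss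
end

section
/- Define on $[0,1]$ the random pseudometric $d_G(\alpha,\beta)^2 = \sum_{k>J}\big[(I_{\alpha,k}+I_{\beta,k})(2(k-J)-1)\big] - \big(\sum_{k>J}(I_{\alpha,k}-I_{\beta,k})\big)^2$ with $J = J(\alpha,\beta)$. Then almost surely $d_G(\alpha,\beta)^2 \ge \sum_{k>J} 2(2(k-J)-1)\,(I_{\alpha,k}\wedge I_{\beta,k}) > 0$ for $\alpha\ne\beta$, and the metrics $d_G$ and $d_2(\alpha,\beta)=2^{-J(\alpha,\beta)}$ induce the same topology on $[0,1]$ (i.e. are equivalent). -/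
/-!
An interval of level `k` has length the product of `k` independent factors `V` or `1 - V`, and
`E[V² + (1 - V)²] = 2/3`, so `E[∑_{|φ| = k} I_φ²] = (2/3)^k`. Markov's inequality and
Borel–Cantelli give, almost surely, `I_φ ≤ C r^|φ|` for any fixed `r` with `r² > 2/3`, while all
`I_φ > 0`. With this decay the series defining `d_G²` converge and are `O(r^J)`, so `d_G → 0` as
`J → ∞`. Conversely `(∑ c_l)² ≤ ∑ |c_l| (2l + 1)` for `|c_l| ≤ 1` gives
`d_G² ≥ ∑ 2(2l + 1)(a_l ∧ b_l) ≥ 2(a_0 ∧ b_0)`, and for `J < N` this is at least twice the least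
length of the finitely many intervals of level at most `N`; so `d_G → 0` forces `J → ∞`.
-/

open MeasureTheory ProbabilityTheory Finset Filter Topology
open scoped ENNReal

def splitFactor : Bool → ℝ → ℝ
  | false, x => x
  | true, x => 1 - x

lemma measurable_splitFactor (b : Bool) : Measurable (splitFactor b) := by
  cases b
  · exact measurable_id
  · exact measurable_const.sub measurable_id

lemma splitFactor_mem_Ioo {x : ℝ} (hx : x ∈ Set.Ioo 0 1) (b : Bool) :
    splitFactor b x ∈ Set.Ioo 0 1 := by
  obtain ⟨h0, h1⟩ := hx
  cases b <;> simp only [splitFactor, Set.mem_Ioo] <;> constructor <;> linarith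

/-- `[L φ, R φ]` is the interval with binary address `φ`; it is cut at the relative position
`V φ` into its left child `φ ++ [false]` and its right child `φ ++ [true]`. -/
structure IsIntervalSplitting (V L R : List Bool → ℝ) : Prop where
  left_nil : L [] = 0
  right_nil : R [] = 1
  left_false : ∀ φ, L (φ ++ [false]) = L φ
  right_true : ∀ φ, R (φ ++ [true]) = R φ
  right_false : ∀ φ, R (φ ++ [false]) = L φ + (R φ - L φ) * V φ
  left_true : ∀ φ, L (φ ++ [true]) = R (φ ++ [false])

namespace IsIntervalSplitting

variable {V L R : List Bool → ℝ}

lemma length_nil (h : IsIntervalSplitting V L R) : R [] - L [] = 1 := by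
  rw [h.left_nil, h.right_nil, sub_zero]

lemma length_append (h : IsIntervalSplitting V L R) (φ : List Bool) (b : Bool) :
    R (φ ++ [b]) - L (φ ++ [b]) = (R φ - L φ) * splitFactor b (V φ) := by
  cases b
  · rw [h.left_false, h.right_false, splitFactor]; ring
  · rw [h.right_true, h.left_true, h.right_false, splitFactor]; ring

lemma length_eq_prod (h : IsIntervalSplitting V L R) (φ : List Bool) :
    R φ - L φ = ∏ i ∈ range φ.length, splitFactor (φ.getD i false) (V (φ.take i)) := by
  induction φ using List.reverseRecOn with
  | nil => simp [h.length_nil]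
  | append_singleton φ b ih =>
    rw [h.length_append, ih, List.length_append, List.length_singleton, prod_range_succ]
    congr 1
    · refine prod_congr rfl fun i hi => ?_
      rw [mem_range] at hi
      rw [List.getD_append _ _ _ _ hi, List.take_append_of_le_length hi.le]
    · simp

lemma length_mem_Ioc (h : IsIntervalSplitting V L R) (hV : ∀ φ, V φ ∈ Set.Ioo 0 1)
    (φ : List Bool) : R φ - L φ ∈ Set.Ioc 0 1 := by
  induction φ using List.reverseRecOn with
  | nil => simp [h.length_nil]
  | append_singleton φ b ih =>
    obtain ⟨hf0, hf1⟩ := splitFactor_mem_Ioo (hV φ) b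
    rw [h.length_append]
    exact ⟨mul_pos ih.1 hf0, mul_le_one₀ ih.2 hf0.le hf1.le⟩

lemma sq_length_append_false_add_true (h : IsIntervalSplitting V L R) (φ : List Bool) :
    (R (φ ++ [false]) - L (φ ++ [false])) ^ 2 + (R (φ ++ [true]) - L (φ ++ [true])) ^ 2
      = (R φ - L φ) ^ 2 * (V φ ^ 2 + (1 - V φ) ^ 2) := by
  rw [h.length_append, h.length_append]
  simp only [splitFactor]
  ring

end IsIntervalSplitting

def sumOverExtensions (f : List Bool → ℝ) : List Bool → ℕ → ℝ
  | ψ, 0 => f ψ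
  | ψ, k + 1 => sumOverExtensions f (ψ ++ [false]) k + sumOverExtensions f (ψ ++ [true]) k

section sumOverExtensions

variable {f : List Bool → ℝ}

lemma sumOverExtensions_nonneg (hf : ∀ φ, 0 ≤ f φ) (ψ : List Bool) (k : ℕ) :
    0 ≤ sumOverExtensions f ψ k := by
  induction k generalizing ψ with
  | zero => exact hf ψ
  | succ k ih => exact add_nonneg (ih _) (ih _)

lemma le_sumOverExtensions (hf : ∀ φ, 0 ≤ f φ) (ψ χ : List Bool) :
    f (ψ ++ χ) ≤ sumOverExtensions f ψ χ.length := by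
  induction χ generalizing ψ with
  | nil => simp [sumOverExtensions]
  | cons b χ ih =>
    rw [List.length_cons, sumOverExtensions, ← List.singleton_append, ← List.append_assoc]
    cases b
    · linarith [ih (ψ ++ [false]), sumOverExtensions_nonneg hf (ψ ++ [true]) χ.length]
    · linarith [ih (ψ ++ [true]), sumOverExtensions_nonneg hf (ψ ++ [false]) χ.length]

end sumOverExtensions

lemma sq_sum_range_le_sum_mul_odd {x : ℕ → ℝ} (h0 : ∀ l, 0 ≤ x l) (h1 : ∀ l, x l ≤ 1)
    (n : ℕ) :
    (∑ l ∈ range n, x l) ^ 2 ≤ ∑ l ∈ range n, x l * (2 * l + 1) := by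
  induction n with
  | zero => simp
  | succ n ih =>
    have hsum : ∑ l ∈ range n, x l ≤ n := by
      simpa using sum_le_sum fun l (_ : l ∈ range n) => h1 l
    rw [sum_range_succ, sum_range_succ]
    nlinarith [h0 n, h1 n, sum_nonneg fun l (_ : l ∈ range n) => h0 l]

lemma sq_tsum_le_tsum_abs_mul_odd {c : ℕ → ℝ} (h1 : ∀ l, |c l| ≤ 1)
    (hs : Summable fun l => |c l| * (2 * l + 1)) :
    (∑' l, c l) ^ 2 ≤ ∑' l, |c l| * (2 * l + 1) := by
  have hc : Summable c := .of_abs <| hs.of_nonneg_of_le (fun l => abs_nonneg _) fun l =>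
    le_mul_of_one_le_right (abs_nonneg _) (by linarith [(Nat.cast_nonneg l : (0 : ℝ) ≤ l)])
  refine le_of_tendsto' (hc.hasSum.tendsto_sum_nat.pow 2) fun n => ?_
  have habs := abs_sum_le_sum_abs c (range n)
  calc (∑ l ∈ range n, c l) ^ 2 ≤ (∑ l ∈ range n, |c l|) ^ 2 :=
        sq_le_sq' (abs_le.1 habs).1 (abs_le.1 habs).2
    _ ≤ ∑ l ∈ range n, |c l| * (2 * l + 1) :=
        sq_sum_range_le_sum_mul_odd (fun l => abs_nonneg _) h1 n
    _ ≤ ∑' l, |c l| * (2 * l + 1) := hs.sum_le_tsum _ fun l _ => by positivity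

lemma summable_mul_odd_of_le_mul_pow {a : ℕ → ℝ} {D r : ℝ} (hr0 : 0 ≤ r) (hr1 : r < 1)
    (ha0 : ∀ l, 0 ≤ a l) (ha : ∀ l, a l ≤ D * r ^ l) :
    Summable (fun l => a l * (2 * l + 1)) ∧
      ∑' l, a l * (2 * l + 1) ≤ D * ∑' l : ℕ, (2 * l + 1) * r ^ l := by
  have hr : ‖r‖ < 1 := by rwa [Real.norm_of_nonneg hr0]
  have hw : Summable fun l : ℕ => D * ((2 * l + 1) * r ^ l) := by
    refine Summable.mul_left D ?_
    simpa [add_mul, mul_assoc] using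
      ((summable_pow_mul_geometric_of_norm_lt_one 1 hr).mul_left 2).add
        (summable_geometric_of_lt_one hr0 hr1)
  have hle : ∀ l : ℕ, a l * (2 * l + 1) ≤ D * ((2 * l + 1) * r ^ l) := fun l => by
    have := mul_le_mul_of_nonneg_left (ha l) (by positivity : (0 : ℝ) ≤ 2 * l + 1)
    linarith
  have hs := hw.of_nonneg_of_le (fun l => mul_nonneg (ha0 l) (by positivity)) hle
  exact ⟨hs, (hs.tsum_le_tsum hle hw).trans_eq tsum_mul_left⟩

/-- `d_G(α, β)²` in terms of `a l = I_{α, J+1+l}` and `b l = I_{β, J+1+l}`. -/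
noncomputable def gapSq (a b : ℕ → ℝ) : ℝ :=
  (∑' l : ℕ, (a l + b l) * (2 * (l : ℝ) + 1)) - (∑' l : ℕ, (a l - b l)) ^ 2

section gapSq

variable {a b : ℕ → ℝ}

lemma tsum_min_le_gapSq (ha : ∀ l, a l ∈ Set.Icc 0 1) (hb : ∀ l, b l ∈ Set.Icc 0 1)
    (hs : Summable fun l => (a l + b l) * (2 * l + 1)) :
    Summable (fun l => 2 * (2 * l + 1) * min (a l) (b l)) ∧
      ∑' l : ℕ, 2 * (2 * (l : ℝ) + 1) * min (a l) (b l) ≤ gapSq a b := by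
  have hmin : ∀ l, 2 * min (a l) (b l) = a l + b l - |a l - b l| := fun l => by
    linarith [min_add_max (a l) (b l), max_sub_min_eq_abs' (a l) (b l)]
  have hterm : ∀ l : ℕ, 2 * (2 * l + 1) * min (a l) (b l)
      = (a l + b l) * (2 * l + 1) - |a l - b l| * (2 * l + 1) := fun l => by
    rw [← sub_mul, ← hmin]; ring
  have hsabs : Summable fun l => |a l - b l| * (2 * l + 1) :=
    hs.of_nonneg_of_le (fun l => by positivity) fun l => by
      refine mul_le_mul_of_nonneg_right (abs_sub_le_iff.2 ⟨?_, ?_⟩) (by positivity) <;>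
        linarith [(ha l).1, (hb l).1]
  have hsq := sq_tsum_le_tsum_abs_mul_odd (c := fun l => a l - b l) (fun l => abs_sub_le_iff.2
    ⟨by linarith [(ha l).2, (hb l).1], by linarith [(ha l).1, (hb l).2]⟩) hsabs
  simp_rw [hterm]
  refine ⟨hs.sub hsabs, ?_⟩
  rw [hs.tsum_sub hsabs, gapSq]
  linarith

lemma two_mul_min_le_gapSq (ha : ∀ l, a l ∈ Set.Icc 0 1) (hb : ∀ l, b l ∈ Set.Icc 0 1)
    (hs : Summable fun l => (a l + b l) * (2 * l + 1)) :
    2 * min (a 0) (b 0) ≤ gapSq a b := by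
  obtain ⟨hsmin, hle⟩ := tsum_min_le_gapSq ha hb hs
  refine le_trans ?_ ((hsmin.le_tsum 0 fun l _ => ?_).trans hle)
  · simp
  · have := le_min (ha l).1 (hb l).1
    positivity

lemma gapSq_le {D r : ℝ} (hr0 : 0 ≤ r) (hr1 : r < 1) (ha0 : ∀ l, 0 ≤ a l)
    (hb0 : ∀ l, 0 ≤ b l) (ha : ∀ l, a l ≤ D * r ^ l) (hb : ∀ l, b l ≤ D * r ^ l) :
    gapSq a b ≤ 2 * D * ∑' l : ℕ, (2 * l + 1) * r ^ l := by
  obtain ⟨hsa, hla⟩ := summable_mul_odd_of_le_mul_pow hr0 hr1 ha0 ha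
  obtain ⟨hsb, hlb⟩ := summable_mul_odd_of_le_mul_pow hr0 hr1 hb0 hb
  have hsplit : ∑' l : ℕ, (a l + b l) * (2 * (l : ℝ) + 1)
      = ∑' l : ℕ, a l * (2 * l + 1) + ∑' l : ℕ, b l * (2 * l + 1) := by
    rw [← hsa.tsum_add hsb]; simp_rw [add_mul]
  rw [gapSq, hsplit]
  linarith [sq_nonneg (∑' l : ℕ, (a l - b l))]

end gapSq

lemma two_zpow_neg_lt_two_zpow_neg {m n : ℕ} :
    (2 : ℝ) ^ (-(m : ℤ)) < 2 ^ (-(n : ℤ)) ↔ n < m := by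
  rw [zpow_lt_zpow_iff_right₀ one_lt_two]; omega

lemma exists_pos_forall_le_of_length_le {I : List Bool → ℝ} (hI : ∀ φ, 0 < I φ) (N : ℕ) :
    ∃ m > 0, ∀ φ : List Bool, φ.length ≤ N → m ≤ I φ := by
  have hev : ∀ᶠ m in 𝓝[>] (0 : ℝ), ∀ φ ∈ {φ : List Bool | φ.length ≤ N}, m ≤ I φ :=
    (List.finite_length_le Bool N).eventually_all.2 fun φ _ =>
      nhdsWithin_le_nhds (eventually_le_nhds (hI φ))
  obtain ⟨m, hm, hm0⟩ := (hev.and self_mem_nhdsWithin).exists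
  exact ⟨m, hm0, hm⟩

section MetricComparison

variable {X : Type*} {s : Set X} {α : X} {J : X → ℕ} {d2 dG : X → ℝ}

lemma exists_forall_lt_of_sq_le {B : ℕ → ℝ} (hB : Tendsto B atTop (𝓝 0))
    (hd2 : ∀ β, α ≠ β → d2 β = 2 ^ (-(J β : ℤ))) (hdG : dG α = 0)
    (hup : ∀ β ∈ s, α ≠ β → dG β ^ 2 ≤ B (J β)) {ε : ℝ} (hε : 0 < ε) :
    ∃ δ > 0, ∀ β ∈ s, d2 β < δ → dG β < ε := by
  obtain ⟨N, hN⟩ := eventually_atTop.1 (hB.eventually (gt_mem_nhds (pow_pos hε 2)))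
  refine ⟨2 ^ (-(N : ℤ)), by positivity, fun β hβ hd => ?_⟩
  rcases eq_or_ne α β with rfl | hne
  · rwa [hdG]
  rw [hd2 β hne, two_zpow_neg_lt_two_zpow_neg] at hd
  exact (abs_lt_of_sq_lt_sq' ((hup β hβ hne).trans_lt (hN _ hd.le)) hε.le).2

lemma exists_forall_lt_of_le_sq (hd2 : ∀ β, α ≠ β → d2 β = 2 ^ (-(J β : ℤ))) (hd2α : d2 α = 0)
    (hdG : ∀ β, 0 ≤ dG β) (hlow : ∀ N, ∃ c > 0, ∀ β ∈ s, α ≠ β → J β < N → c ≤ dG β ^ 2)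
    {ε : ℝ} (hε : 0 < ε) :
    ∃ δ > 0, ∀ β ∈ s, dG β < δ → d2 β < ε := by
  obtain ⟨N, hN⟩ := exists_pow_lt_of_lt_one hε (by norm_num : (2 : ℝ)⁻¹ < 1)
  obtain ⟨c, hc, hlowN⟩ := hlow N
  refine ⟨√c, Real.sqrt_pos.2 hc, fun β hβ hd => ?_⟩
  rcases eq_or_ne α β with rfl | hne
  · rwa [hd2α]
  by_contra! hεd
  rw [inv_pow, ← zpow_natCast, ← zpow_neg] at hN
  rw [hd2 β hne] at hεd
  have hJ := two_zpow_neg_lt_two_zpow_neg.1 (hN.trans_le hεd)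
  exact (hlowN β hβ hne hJ).not_gt ((Real.lt_sqrt (hdG β)).1 hd)

end MetricComparison

lemma exists_forall_le_mul_pow {ι : Type*} (f : ι → ℝ) (n : ι → ℕ) {r : ℝ} (hr0 : 0 < r)
    (hr1 : r ≤ 1) (hf : ∀ i, f i ≤ 1) (hev : ∀ᶠ k in atTop, ∀ i, n i = k → f i ≤ r ^ k) :
    ∃ C, ∀ i, f i ≤ C * r ^ n i := by
  obtain ⟨K, hK⟩ := eventually_atTop.1 hev
  refine ⟨(r ^ K)⁻¹, fun i => ?_⟩
  rcases le_or_gt K (n i) with hi | hi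
  · calc f i ≤ r ^ n i := hK _ hi i rfl
      _ ≤ (r ^ K)⁻¹ * r ^ n i := le_mul_of_one_le_left (by positivity)
          (one_le_inv₀ (by positivity) |>.2 (pow_le_one₀ hr0.le hr1))
  · calc f i ≤ 1 := hf i
      _ = (r ^ K)⁻¹ * r ^ K := (inv_mul_cancel₀ (by positivity)).symm
      _ ≤ (r ^ K)⁻¹ * r ^ n i :=
          mul_le_mul_of_nonneg_left (pow_le_pow_of_le_one hr0.le hr1 hi.le) (by positivity)

section Probability

variable {Ω : Type*} [MeasurableSpace Ω] {μ : Measure Ω}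

lemma ae_forall_mem_Ioo_of_map_eq {ι : Type*} [Countable ι] {X : ι → Ω → ℝ}
    (hX : ∀ i, Measurable (X i)) (hmap : ∀ i, μ.map (X i) = volume.restrict (Set.Icc 0 1)) :
    ∀ᵐ ω ∂μ, ∀ i, X i ω ∈ Set.Ioo 0 1 := by
  refine ae_all_iff.2 fun i => ae_of_ae_map (hX i).aemeasurable ?_
  rw [hmap, ← Measure.restrict_congr_set Ioo_ae_eq_Icc]
  exact ae_restrict_mem measurableSet_Ioo

lemma integral_sq_add_one_sub_sq_of_map_eq {X : Ω → ℝ} (hX : Measurable X)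
    (hmap : μ.map X = volume.restrict (Set.Icc 0 1)) :
    ∫ ω, X ω ^ 2 + (1 - X ω) ^ 2 ∂μ = 2 / 3 := by
  rw [← integral_map (f := fun x : ℝ => x ^ 2 + (1 - x) ^ 2) hX.aemeasurable (by fun_prop),
    hmap, integral_Icc_eq_integral_Ioc, ← intervalIntegral.integral_of_le zero_le_one,
    intervalIntegral.integral_add,
    intervalIntegral.integral_comp_sub_left (fun x => x ^ 2)]
  · norm_num
  all_goals exact (by fun_prop : Continuous fun x : ℝ => _).intervalIntegrable _ _

lemma ProbabilityTheory.iIndepFun.indepFun_prod_prefix [IsProbabilityMeasure μ]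
    {V : List Bool → Ω → ℝ} (hV : iIndepFun V μ) (hVm : ∀ φ, Measurable (V φ)) (φ : List Bool)
    {g : ℕ → ℝ → ℝ} (hg : ∀ i, Measurable (g i)) :
    IndepFun (fun ω => ∏ i ∈ range φ.length, g i (V (φ.take i) ω)) (V φ) μ := by
  classical
  set S := (range φ.length).image φ.take
  have hlen : ∀ i ∈ range φ.length, (φ.take i).length = i := fun i hi =>
    List.length_take_of_le (mem_range.1 hi).le
  have hφS : φ ∉ S := by
    simp only [S, mem_image, not_exists, not_and]
    intro i hi h
    exact (mem_range.1 hi).ne (h ▸ hlen i hi).symm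
  have hF : Measurable fun x : S → ℝ => ∏ ψ ∈ S.attach, g ψ.1.length (x ψ) :=
    Finset.measurable_prod _ fun ψ _ => (hg _).comp (measurable_pi_apply ψ)
  convert (hV.indepFun_finset S {φ} (disjoint_singleton_right.2 hφS) hVm).comp hF
    (measurable_pi_apply ⟨φ, mem_singleton_self φ⟩) using 1
  · funext ω
    simp only [Function.comp_apply]
    rw [prod_attach S (fun ψ => g ψ.length (V ψ ω)), prod_image fun i hi j hj hij => by
      rw [← hlen i hi, ← hlen j hj, hij]]
    exact prod_congr rfl fun i hi => by rw [hlen i hi]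
  · rfl

lemma ae_eventually_lt_of_summable_integral_div [IsFiniteMeasure μ] {X : ℕ → Ω → ℝ}
    {c : ℕ → ℝ} (hX0 : ∀ k, 0 ≤ X k) (hXi : ∀ k, Integrable (X k) μ) (hc : ∀ k, 0 < c k)
    (hsum : Summable fun k => (∫ ω, X k ω ∂μ) / c k) :
    ∀ᵐ ω ∂μ, ∀ᶠ k in atTop, X k ω < c k := by
  have hmarkov : ∀ k, μ {ω | c k ≤ X k ω} ≤ ENNReal.ofReal ((∫ ω, X k ω ∂μ) / c k) := by
    intro k
    rw [← ofReal_measureReal]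
    exact ENNReal.ofReal_le_ofReal <| (le_div_iff₀' (hc k)).2 <|
      mul_meas_ge_le_integral_of_nonneg (.of_forall (hX0 k)) (hXi k) (c k)
  have hfin : ∑' k, μ {ω | c k ≤ X k ω} ≠ ∞ := by
    refine ne_top_of_le_ne_top ?_ (ENNReal.tsum_le_tsum hmarkov)
    rw [← ENNReal.ofReal_tsum_of_nonneg (fun k => div_nonneg (integral_nonneg (hX0 k))
      (hc k).le) hsum]
    exact ENNReal.ofReal_ne_top
  filter_upwards [ae_eventually_notMem hfin] with ω hω
  simpa using hω

lemma integrable_sumOverExtensions {F : List Bool → Ω → ℝ} (hF : ∀ φ, Integrable (F φ) μ)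
    (ψ : List Bool) (k : ℕ) : Integrable (fun ω => sumOverExtensions (F · ω) ψ k) μ := by
  induction k generalizing ψ with
  | zero => exact hF ψ
  | succ k ih => exact (ih _).add (ih _)

section RandomSplitting

variable [IsProbabilityMeasure μ] {V L R : List Bool → Ω → ℝ}

lemma measurable_length (hs : ∀ ω, IsIntervalSplitting (V · ω) (L · ω) (R · ω))
    (hVm : ∀ φ, Measurable (V φ)) (φ : List Bool) : Measurable fun ω => R φ ω - L φ ω := by
  simp_rw [fun ω => (hs ω).length_eq_prod φ]
  exact Finset.measurable_prod _ fun i _ => (measurable_splitFactor _).comp (hVm _)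

lemma integrable_sq_length (hs : ∀ ω, IsIntervalSplitting (V · ω) (L · ω) (R · ω))
    (hVm : ∀ φ, Measurable (V φ))
    (hmap : ∀ φ, μ.map (V φ) = volume.restrict (Set.Icc 0 1)) (φ : List Bool) :
    Integrable (fun ω => (R φ ω - L φ ω) ^ 2) μ := by
  refine .of_bound ((measurable_length hs hVm φ).pow_const 2).aestronglyMeasurable 1 ?_
  filter_upwards [ae_forall_mem_Ioo_of_map_eq hVm hmap] with ω hV
  obtain ⟨h0, h1⟩ := (hs ω).length_mem_Ioc hV φ
  rw [Real.norm_of_nonneg (by positivity)]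
  exact pow_le_one₀ h0.le h1

lemma integral_sumOverExtensions_sq_length
    (hs : ∀ ω, IsIntervalSplitting (V · ω) (L · ω) (R · ω)) (hVm : ∀ φ, Measurable (V φ))
    (hV : iIndepFun V μ) (hmap : ∀ φ, μ.map (V φ) = volume.restrict (Set.Icc 0 1))
    (ψ : List Bool) (k : ℕ) :
    ∫ ω, sumOverExtensions (fun φ => (R φ ω - L φ ω) ^ 2) ψ k ∂μ
      = (2 / 3) ^ k * ∫ ω, (R ψ ω - L ψ ω) ^ 2 ∂μ := by
  have hint := integrable_sq_length hs hVm hmap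
  induction k generalizing ψ with
  | zero => simp [sumOverExtensions]
  | succ k ih =>
    have hindep : IndepFun (fun ω => (R ψ ω - L ψ ω) ^ 2)
        (fun ω => V ψ ω ^ 2 + (1 - V ψ ω) ^ 2) μ := by
      have := hV.indepFun_prod_prefix hVm ψ (g := fun i => splitFactor (ψ.getD i false))
        fun _ => measurable_splitFactor _
      simp_rw [← fun ω => (hs ω).length_eq_prod ψ] at this
      exact this.comp (measurable_id.pow_const 2)
        (by fun_prop : Measurable fun x : ℝ => x ^ 2 + (1 - x) ^ 2)
    simp only [sumOverExtensions]
    rw [integral_add (integrable_sumOverExtensions hint _ k)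
      (integrable_sumOverExtensions hint _ k), ih, ih, ← mul_add,
      ← integral_add (hint _) (hint _)]
    simp_rw [fun ω => (hs ω).sq_length_append_false_add_true ψ]
    rw [hindep.integral_fun_mul_eq_mul_integral (hint ψ).aestronglyMeasurable
      (by fun_prop), integral_sq_add_one_sub_sq_of_map_eq (hVm ψ) (hmap ψ)]
    ring

theorem ae_exists_forall_length_le_mul_pow
    (hs : ∀ ω, IsIntervalSplitting (V · ω) (L · ω) (R · ω)) (hVm : ∀ φ, Measurable (V φ))
    (hV : iIndepFun V μ) (hmap : ∀ φ, μ.map (V φ) = volume.restrict (Set.Icc 0 1))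
    {r : ℝ} (hr0 : 0 < r) (hr1 : r ≤ 1) (hr : 2 / 3 < r ^ 2) :
    ∀ᵐ ω ∂μ, ∃ C, ∀ φ, R φ ω - L φ ω ≤ C * r ^ φ.length := by
  set X : ℕ → Ω → ℝ := fun k ω => sumOverExtensions (fun φ => (R φ ω - L φ ω) ^ 2) [] k
  have hsum : Summable fun k => (∫ ω, X k ω ∂μ) / (r ^ k) ^ 2 := by
    simp_rw [X, integral_sumOverExtensions_sq_length hs hVm hV hmap, (hs _).length_nil]
    refine (summable_geometric_of_lt_one (by positivity)
      ((div_lt_one (by positivity)).2 hr)).congr fun k => ?_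
    simp [div_pow, ← pow_mul, mul_comm k]
  have hBC := ae_eventually_lt_of_summable_integral_div
    (fun k ω => sumOverExtensions_nonneg (fun _ => sq_nonneg _) [] k)
    (integrable_sumOverExtensions (integrable_sq_length hs hVm hmap) [])
    (fun k => by positivity) hsum
  filter_upwards [ae_forall_mem_Ioo_of_map_eq hVm hmap, hBC] with ω hV hX
  refine exists_forall_le_mul_pow _ List.length hr0 hr1
    (fun φ => ((hs ω).length_mem_Ioc hV φ).2) ?_
  filter_upwards [hX] with k hk φ rfl
  exact (lt_of_pow_lt_pow_left₀ 2 (by positivity)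
    ((le_sumOverExtensions (fun _ => sq_nonneg _) [] φ).trans_lt hk)).le

end RandomSplitting

end Probability

theorem dG_lower_bound_and_equivalence_of_le_mul_pow {I : List Bool → ℝ}
    {w : ℝ → ℕ → List Bool} {J : ℝ → ℝ → ℕ} {d2 dG : ℝ → ℝ → ℝ} {C r : ℝ}
    (hr0 : 0 ≤ r) (hr1 : r < 1) (hI : ∀ φ, I φ ∈ Set.Ioc 0 1)
    (hIC : ∀ φ, I φ ≤ C * r ^ φ.length) (hw : ∀ α ∈ Set.Icc (0 : ℝ) 1, ∀ k, (w α k).length = k)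
    (hd2 : ∀ α β, α ≠ β → d2 α β = (2 : ℝ) ^ (-(J α β : ℤ))) (hd2self : ∀ α, d2 α α = 0)
    (hdGnn : ∀ α β, 0 ≤ dG α β) (hdGself : ∀ α, dG α α = 0)
    (hdG : ∀ α β, α ≠ β → dG α β ^ 2 =
      gapSq (fun l => I (w α (J α β + 1 + l))) (fun l => I (w β (J α β + 1 + l)))) :
    (∀ α ∈ Set.Icc (0 : ℝ) 1, ∀ β ∈ Set.Icc (0 : ℝ) 1, α ≠ β →
      ∑' l : ℕ, 2 * (2 * (l : ℝ) + 1) *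
          min (I (w α (J α β + 1 + l))) (I (w β (J α β + 1 + l))) ≤ dG α β ^ 2 ∧
        0 < dG α β ^ 2) ∧
    (∀ α ∈ Set.Icc (0 : ℝ) 1, ∀ ε : ℝ, 0 < ε →
      (∃ δ > (0 : ℝ), ∀ β ∈ Set.Icc (0 : ℝ) 1, d2 α β < δ → dG α β < ε) ∧
      (∃ δ > (0 : ℝ), ∀ β ∈ Set.Icc (0 : ℝ) 1, dG α β < δ → d2 α β < ε)) := by
  have hI01 : ∀ φ, I φ ∈ Set.Icc 0 1 := fun φ => Set.Ioc_subset_Icc_self (hI φ)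
  have htail : ∀ α ∈ Set.Icc (0 : ℝ) 1, ∀ n l, I (w α (n + l)) ≤ C * r ^ n * r ^ l :=
    fun α hα n l => by simpa [hw α hα, pow_add, mul_assoc] using hIC (w α (n + l))
  have hsum : ∀ α ∈ Set.Icc (0 : ℝ) 1, ∀ β ∈ Set.Icc (0 : ℝ) 1, ∀ n,
      Summable fun l : ℕ => (I (w α (n + l)) + I (w β (n + l))) * (2 * l + 1) :=
    fun α hα β hβ n =>
      ((summable_mul_odd_of_le_mul_pow hr0 hr1 (fun _ => (hI01 _).1) (htail α hα n)).1.add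
        (summable_mul_odd_of_le_mul_pow hr0 hr1 (fun _ => (hI01 _).1) (htail β hβ n)).1).congr
        fun l => (add_mul _ _ _).symm
  have hmin : ∀ α ∈ Set.Icc (0 : ℝ) 1, ∀ β ∈ Set.Icc (0 : ℝ) 1, α ≠ β →
      2 * min (I (w α (J α β + 1))) (I (w β (J α β + 1))) ≤ dG α β ^ 2 := fun α hα β hβ hne => by
    simpa [hdG α β hne] using
      two_mul_min_le_gapSq (fun _ => hI01 _) (fun _ => hI01 _) (hsum α hα β hβ _)
  refine ⟨fun α hα β hβ hne => ⟨?_, ?_⟩, fun α hα ε hε => ⟨?_, ?_⟩⟩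
  · rw [hdG α β hne]
    exact (tsum_min_le_gapSq (fun _ => hI01 _) (fun _ => hI01 _) (hsum α hα β hβ _)).2
  · have := lt_min (hI (w α (J α β + 1))).1 (hI (w β (J α β + 1))).1
    exact (by positivity : (0 : ℝ) < 2 * _).trans_le (hmin α hα β hβ hne)
  · refine exists_forall_lt_of_sq_le (B := fun n => 2 * (C * r ^ (n + 1)) *
      ∑' l : ℕ, (2 * l + 1) * r ^ l) ?_ (hd2 α) (hdGself α) (fun β hβ hne => ?_) hε
    · simpa using ((((tendsto_pow_atTop_nhds_zero_of_lt_one hr0 hr1).comp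
        (tendsto_add_atTop_nat 1)).const_mul C).const_mul 2).mul_const
          (∑' l : ℕ, (2 * l + 1) * r ^ l)
    · exact (hdG α β hne).trans_le (gapSq_le hr0 hr1 (fun _ => (hI01 _).1) (fun _ => (hI01 _).1)
        (htail α hα _) (htail β hβ _))
  · refine exists_forall_lt_of_le_sq (hd2 α) (hd2self α) (hdGnn α) (fun N => ?_) hε
    obtain ⟨m, hm, hmI⟩ := exists_pos_forall_le_of_length_le (fun φ => (hI φ).1) N
    refine ⟨2 * m, by positivity, fun β hβ hne hJ => le_trans ?_ (hmin α hα β hβ hne)⟩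
    gcongr
    exact le_min (hmI _ (by rw [hw α hα]; omega)) (hmI _ (by rw [hw β hβ]; omega))

theorem dG_lower_bound_and_equivalence_general
    (Ω : Type*) [MeasureSpace Ω] [IsProbabilityMeasure (ℙ : Measure Ω)]
    (V : List Bool → Ω → ℝ)
    (hVmeas : ∀ φ, Measurable (V φ))
    (hViid : iIndepFun V ℙ)
    (hVunif : ∀ φ, Measure.map (V φ) ℙ = volume.restrict (Set.Icc (0:ℝ) 1))
    (L R : List Bool → Ω → ℝ)
    (hL0 : ∀ ω, L [] ω = 0) (hR0 : ∀ ω, R [] ω = 1)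
    (hLf : ∀ φ ω, L (φ ++ [false]) ω = L φ ω)
    (hRt : ∀ φ ω, R (φ ++ [true]) ω = R φ ω)
    (hRf : ∀ φ ω, R (φ ++ [false]) ω = L φ ω + (R φ ω - L φ ω) * V φ ω)
    (hLt : ∀ φ ω, L (φ ++ [true]) ω = R (φ ++ [false]) ω)
    (w : ℝ → ℕ → Ω → List Bool)
    (hw : ∀ α ∈ Set.Icc (0:ℝ) 1, ∀ k ω, (w α k ω).length = k ∧
      L (w α k ω) ω ≤ α ∧ (α < R (w α k ω) ω ∨ (α = 1 ∧ R (w α k ω) ω = 1)))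
    (J : ℝ → ℝ → Ω → ℕ)
    (d2 dG : ℝ → ℝ → Ω → ℝ)
    (hd2 : ∀ α β ω, α ≠ β → d2 α β ω = (2:ℝ) ^ (-(J α β ω : ℤ)))
    (hd2self : ∀ α ω, d2 α α ω = 0)
    (hdGnn : ∀ α β ω, 0 ≤ dG α β ω)
    (hdGself : ∀ α ω, dG α α ω = 0)
    (hdG : ∀ α β ω, α ≠ β → (dG α β ω) ^ 2 =
      (∑' l : ℕ,
        ((R (w α (J α β ω + 1 + l) ω) ω - L (w α (J α β ω + 1 + l) ω) ω) +
         (R (w β (J α β ω + 1 + l) ω) ω - L (w β (J α β ω + 1 + l) ω) ω)) *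
          (2 * (l : ℝ) + 1)) -
      (∑' l : ℕ,
        ((R (w α (J α β ω + 1 + l) ω) ω - L (w α (J α β ω + 1 + l) ω) ω) -
         (R (w β (J α β ω + 1 + l) ω) ω - L (w β (J α β ω + 1 + l) ω) ω))) ^ 2) :
    ∀ᵐ ω ∂ℙ,
      (∀ α ∈ Set.Icc (0:ℝ) 1, ∀ β ∈ Set.Icc (0:ℝ) 1, α ≠ β →
        (∑' l : ℕ, 2 * (2 * (l : ℝ) + 1) *
            min (R (w α (J α β ω + 1 + l) ω) ω - L (w α (J α β ω + 1 + l) ω) ω)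
                (R (w β (J α β ω + 1 + l) ω) ω - L (w β (J α β ω + 1 + l) ω) ω)) ≤
          (dG α β ω) ^ 2 ∧
        0 < (dG α β ω) ^ 2) ∧
      (∀ α ∈ Set.Icc (0:ℝ) 1, ∀ ε : ℝ, 0 < ε →
        (∃ δ > (0:ℝ), ∀ β ∈ Set.Icc (0:ℝ) 1, d2 α β ω < δ → dG α β ω < ε) ∧
        (∃ δ > (0:ℝ), ∀ β ∈ Set.Icc (0:ℝ) 1, dG α β ω < δ → d2 α β ω < ε)) := by
  have hs : ∀ ω, IsIntervalSplitting (V · ω) (L · ω) (R · ω) := fun ω =>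
    ⟨hL0 ω, hR0 ω, (hLf · ω), (hRt · ω), (hRf · ω), (hLt · ω)⟩
  filter_upwards [ae_forall_mem_Ioo_of_map_eq hVmeas hVunif,
    ae_exists_forall_length_le_mul_pow hs hVmeas hViid hVunif (r := 5 / 6)
      (by norm_num) (by norm_num) (by norm_num)] with ω hV ⟨C, hC⟩
  exact dG_lower_bound_and_equivalence_of_le_mul_pow (by norm_num) (by norm_num)
    ((hs ω).length_mem_Ioc hV) hC (fun α hα k => (hw α hα k ω).1) (hd2 · · ω) (hd2self · ω)
    (hdGnn · · ω) (hdGself · ω) (hdG · · ω)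

/-- Properties of the random pseudometric
`d_G(α,β)² = ∑_{k>J} (I_{α,k}+I_{β,k})(2(k-J)-1) - (∑_{k>J}(I_{α,k}-I_{β,k}))²`
(here written with `k = J+1+l`): almost surely
`d_G(α,β)² ≥ ∑_{k>J} 2(2(k-J)-1)(I_{α,k} ∧ I_{β,k}) > 0` for `α ≠ β`, and `d_G` and
`d₂(α,β) = 2^{-J(α,β)}` induce the same topology on `[0,1]`. -/
theorem dG_lower_bound_and_equivalence
    (Ω : Type*) [MeasureSpace Ω] [IsProbabilityMeasure (ℙ : Measure Ω)]
    (V : List Bool → Ω → ℝ)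
    (hVmeas : ∀ φ, Measurable (V φ))
    (hViid : iIndepFun V ℙ)
    (hVunif : ∀ φ, Measure.map (V φ) ℙ = volume.restrict (Set.Icc (0:ℝ) 1))
    (L R : List Bool → Ω → ℝ)
    (hL0 : ∀ ω, L [] ω = 0) (hR0 : ∀ ω, R [] ω = 1)
    (hLf : ∀ φ ω, L (φ ++ [false]) ω = L φ ω)
    (hRt : ∀ φ ω, R (φ ++ [true]) ω = R φ ω)
    (hRf : ∀ φ ω, R (φ ++ [false]) ω = L φ ω + (R φ ω - L φ ω) * V φ ω)
    (hLt : ∀ φ ω, L (φ ++ [true]) ω = R (φ ++ [false]) ω)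
    (w : ℝ → ℕ → Ω → List Bool)
    (hw : ∀ α ∈ Set.Icc (0:ℝ) 1, ∀ k ω, (w α k ω).length = k ∧
      L (w α k ω) ω ≤ α ∧ (α < R (w α k ω) ω ∨ (α = 1 ∧ R (w α k ω) ω = 1)))
    (J : ℝ → ℝ → Ω → ℕ)
    (hJ : ∀ α β ω, α ≠ β → ∀ j : ℕ, j ≤ J α β ω ↔ w α j ω = w β j ω)
    (d2 dG : ℝ → ℝ → Ω → ℝ)
    (hd2 : ∀ α β ω, α ≠ β → d2 α β ω = (2:ℝ) ^ (-(J α β ω : ℤ)))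
    (hd2self : ∀ α ω, d2 α α ω = 0)
    (hdGnn : ∀ α β ω, 0 ≤ dG α β ω)
    (hdGself : ∀ α ω, dG α α ω = 0)
    (hdG : ∀ α β ω, α ≠ β → (dG α β ω) ^ 2 =
      (∑' l : ℕ,
        ((R (w α (J α β ω + 1 + l) ω) ω - L (w α (J α β ω + 1 + l) ω) ω) +
         (R (w β (J α β ω + 1 + l) ω) ω - L (w β (J α β ω + 1 + l) ω) ω)) *
          (2 * (l : ℝ) + 1)) -
      (∑' l : ℕ,
        ((R (w α (J α β ω + 1 + l) ω) ω - L (w α (J α β ω + 1 + l) ω) ω) -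
         (R (w β (J α β ω + 1 + l) ω) ω - L (w β (J α β ω + 1 + l) ω) ω))) ^ 2) :
    ∀ᵐ ω ∂ℙ,
      (∀ α ∈ Set.Icc (0:ℝ) 1, ∀ β ∈ Set.Icc (0:ℝ) 1, α ≠ β →
        (∑' l : ℕ, 2 * (2 * (l : ℝ) + 1) *
            min (R (w α (J α β ω + 1 + l) ω) ω - L (w α (J α β ω + 1 + l) ω) ω)
                (R (w β (J α β ω + 1 + l) ω) ω - L (w β (J α β ω + 1 + l) ω) ω)) ≤
          (dG α β ω) ^ 2 ∧
        0 < (dG α β ω) ^ 2) ∧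
      (∀ α ∈ Set.Icc (0:ℝ) 1, ∀ ε : ℝ, 0 < ε →
        (∃ δ > (0:ℝ), ∀ β ∈ Set.Icc (0:ℝ) 1, d2 α β ω < δ → dG α β ω < ε) ∧
        (∃ δ > (0:ℝ), ∀ β ∈ Set.Icc (0:ℝ) 1, dG α β ω < δ → d2 α β ω < ε)) :=
  dG_lower_bound_and_equivalence_general Ω V hVmeas hViid hVunif L R hL0 hR0 hLf hRt hRf hLt w hw J
    d2 dG hd2 hd2self hdGnn hdGself hdG
end
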